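/- (Theorem 2) Let n ≥ 2 and let ρ = ρ₁ ⊗ ρ₂ ⊗ … ⊗ ρ_n be a pure fully separable density matrix on (ℂ^d)^{⊗n} (each ρ_j a density matrix on ℂ^d). Then for every k = 1,…,d²−1, the Ky Fan k-norm of the matricization T_{1|2|…|n} equals √(2ⁿ(d−1)ⁿ/dⁿ). -/

import Mathlib

open Matrix ComplexOrder

/-- The singular values of a real matrix `M`: square roots of eigenvalues of `Mᴴ * M`. -/
noncomputable def singVals {α β : Type*} [Fintype α] [Fintype β] [DecidableEq β]
    (M : Matrix α β ℝ) : β → ℝ :=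
  fun i => Real.sqrt ((Matrix.isHermitian_conjTranspose_mul_self M).eigenvalues i)

/-- The Ky Fan `k`-norm of a real matrix: the sum of its `k` largest singular values
(realized as the largest sum of singular values over index sets of size at most `k`). -/
noncomputable def kyFan {α β : Type*} [Fintype α] [Fintype β] [DecidableEq β]
    (k : ℕ) (M : Matrix α β ℝ) : ℝ :=
  (Finset.univ.powerset.filter (fun s : Finset β => s.card ≤ k)).sup'
    ⟨∅, by simp⟩ (fun s => ∑ i ∈ s, singVals M i)

/-- The full `n`-body correlation tensor entry `t_{a 0, …, a (n-1)}` of `ρ`,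
i.e. `tr (ρ · (λ_{a 0} ⊗ ⋯ ⊗ λ_{a (n-1)}))`. -/
noncomputable def corrFull {n d : ℕ} (lam : Fin (d ^ 2 - 1) → Matrix (Fin d) (Fin d) ℂ)
    (ρ : Matrix (Fin n → Fin d) (Fin n → Fin d) ℂ) (a : Fin n → Fin (d ^ 2 - 1)) : ℝ :=
  (Matrix.trace (ρ * Matrix.of (fun v w : Fin n → Fin d => ∏ j, lam (a j) (v j) (w j)))).re

/-!
Each factor of a pure product state is pure, since `tr ρ² = ∏ⱼ tr ρⱼ²` and every `tr ρⱼ² ≤ 1`.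
Expanding a pure `ρⱼ` in the trace-orthogonal basis `{1, λ₁, …}` of all `d × d` matrices shows
that its Bloch vector `uⱼ = (tr ρⱼλᵢ)ᵢ` has squared length `2(d-1)/d`. The correlation tensor of
the product state is `u₁ ⊗ ⋯ ⊗ uₙ`, so `T_{1|2|…|n}` is the rank-one matrix
`u₁ (u₂ ⊗ ⋯ ⊗ uₙ)ᵀ`, whose only nonzero singular value is `|u₁| ⋯ |uₙ| = (2(d-1)/d)^{n/2}`;
hence all its Ky Fan norms equal this value.
-/

namespace Matrix

section PiKron

variable {ι m R : Type*} [Fintype ι] [DecidableEq ι] [Fintype m] [CommSemiring R]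

/-- The Kronecker product `A 0 ⊗ ⋯ ⊗ A (n-1)` of a finite family of square matrices,
indexed by tuples. -/
def piKron (A : ι → Matrix m m R) : Matrix (ι → m) (ι → m) R :=
  of fun v w => ∏ j, A j (v j) (w j)

theorem piKron_mul_piKron (A B : ι → Matrix m m R) : piKron A * piKron B = piKron (A * B) := by
  ext v w
  simp only [piKron, mul_apply, of_apply, Pi.mul_apply, Fintype.prod_sum, ← Finset.prod_mul_distrib]

theorem trace_piKron (A : ι → Matrix m m R) : (piKron A).trace = ∏ j, (A j).trace := by
  simp only [trace, diag, piKron, of_apply, Fintype.prod_sum]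

end PiKron

theorem dotProduct_prod_eq_prod_dotProduct {ι κ R : Type*} [Fintype ι] [DecidableEq ι]
    [Fintype κ] [CommSemiring R] (x y : ι → κ → R) :
    (fun c : ι → κ => ∏ j, x j (c j)) ⬝ᵥ (fun c => ∏ j, y j (c j)) = ∏ j, x j ⬝ᵥ y j := by
  simp only [dotProduct, ← Finset.prod_mul_distrib, Fintype.prod_sum]

section Hermitian

variable {𝕜 n : Type*} [RCLike 𝕜] [Fintype n] {A B : Matrix n n 𝕜}

theorem IsHermitian.ofReal_re_trace_mul (hA : A.IsHermitian) (hB : B.IsHermitian) :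
    ((RCLike.re (A * B).trace : ℝ) : 𝕜) = (A * B).trace := by
  rw [← RCLike.conj_eq_iff_re, starRingEnd_apply, ← trace_conjTranspose, conjTranspose_mul,
    hA.eq, hB.eq, trace_mul_comm]

variable [DecidableEq n]

theorem IsHermitian.trace_mul_self (hA : A.IsHermitian) :
    (A * A).trace = ∑ i, ((hA.eigenvalues i ^ 2 : ℝ) : 𝕜) := by
  conv_lhs => rw [hA.spectral_theorem, ← map_mul, Unitary.conjStarAlgAut_apply, trace_mul_cycle,
    Unitary.coe_star_mul_self, one_mul, diagonal_mul_diagonal, trace_diagonal]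
  simp [sq]

theorem PosSemidef.re_trace_mul_self_le (hA : A.PosSemidef) :
    RCLike.re (A * A).trace ≤ RCLike.re A.trace ^ 2 := by
  rw [hA.1.trace_mul_self, hA.1.trace_eq_sum_eigenvalues, ← RCLike.ofReal_sum, ← RCLike.ofReal_sum,
    RCLike.ofReal_re, RCLike.ofReal_re]
  exact Finset.sum_sq_le_sq_sum_of_nonneg fun i _ => hA.eigenvalues_nonneg i

theorem IsHermitian.re_trace_mul_self_nonneg (hA : A.IsHermitian) :
    0 ≤ RCLike.re (A * A).trace := by
  rw [hA.trace_mul_self, ← RCLike.ofReal_sum, RCLike.ofReal_re]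
  positivity

theorem IsHermitian.exists_eigenvalues_eq_of_mul_self_eq_smul (hA : A.IsHermitian) {t : ℝ}
    (ht : t ≠ 0) (hsq : A * A = t • A) (htr : A.trace = t) :
    ∃ i₀, hA.eigenvalues i₀ = t ∧ ∀ i ≠ i₀, hA.eigenvalues i = 0 := by
  have hμ : ∀ i, hA.eigenvalues i = 0 ∨ hA.eigenvalues i = t := by
    intro i
    set v := ⇑(hA.eigenvectorBasis i)
    have hv : v ≠ 0 := (WithLp.ofLp_eq_zero 2).ne.2 <| hA.eigenvectorBasis.orthonormal.ne_zero i
    have hAv := hA.mulVec_eigenvectorBasis i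
    have : (hA.eigenvalues i * hA.eigenvalues i) • v = (t * hA.eigenvalues i) • v := by
      rw [mul_smul, mul_smul, ← hAv, ← mulVec_smul, ← hAv, mulVec_mulVec, hsq, smul_mulVec]
    have hsq : hA.eigenvalues i * hA.eigenvalues i = t * hA.eigenvalues i :=
      smul_left_injective ℝ hv this
    by_cases h0 : hA.eigenvalues i = 0
    · exact .inl h0
    · exact .inr (mul_right_cancel₀ h0 hsq)
  have hsum : ∑ i, hA.eigenvalues i = t := by
    exact_mod_cast hA.trace_eq_sum_eigenvalues.symm.trans htr
  set S := Finset.univ.filter fun i => hA.eigenvalues i ≠ 0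
  have hS : ∑ i, hA.eigenvalues i = S.card * t := by
    rw [← Finset.sum_filter_ne_zero, Finset.cast_card, Finset.sum_mul, one_mul]
    exact Finset.sum_congr rfl fun i hi => (hμ i).resolve_left (Finset.mem_filter.1 hi).2
  obtain ⟨i₀, hi₀⟩ := Finset.card_eq_one.1 <| by
    exact_mod_cast mul_right_cancel₀ ht ((hS.symm.trans hsum).trans (one_mul t).symm)
  have hmem : ∀ i, hA.eigenvalues i ≠ 0 ↔ i = i₀ := fun i => by
    simpa [S] using Finset.ext_iff.1 hi₀ i
  exact ⟨i₀, (hμ i₀).resolve_left ((hmem i₀).2 rfl), fun i hi => not_not.1 (mt (hmem i).1 hi)⟩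

theorem trace_mul_self_eq_one_of_piKron_mul_self {ι : Type*} [Fintype ι] [DecidableEq ι]
    {A : ι → Matrix n n 𝕜}
    (hA : ∀ j, (A j).PosSemidef) (htr : ∀ j, (A j).trace = 1)
    (hpure : piKron A * piKron A = piKron A) (j : ι) : (A j * A j).trace = 1 := by
  set s : ι → ℝ := fun j => RCLike.re (A j * A j).trace
  have hs : ∀ j, (s j : 𝕜) = (A j * A j).trace := fun j => (hA j).1.ofReal_re_trace_mul (hA j).1
  have hprod : ∏ j, s j = 1 := by
    apply RCLike.ofReal_injective (K := 𝕜)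
    rw [RCLike.ofReal_prod, RCLike.ofReal_one]
    simp only [hs]
    rw [← trace_piKron, ← Pi.mul_def, ← piKron_mul_piKron, hpure, trace_piKron]
    simp [htr]
  have hle : ∀ j, s j ≤ 1 := fun j => by
    simpa [htr] using (hA j).re_trace_mul_self_le
  have h0 : ∀ j, 0 ≤ s j := fun j => (hA j).1.re_trace_mul_self_nonneg
  have hge : 1 ≤ s j :=
    calc 1 = s j * ∏ i ∈ Finset.univ.erase j, s i :=
          ((Finset.mul_prod_erase _ _ (Finset.mem_univ j)).trans hprod).symm
      _ ≤ s j :=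
          mul_le_of_le_one_right (h0 j) (Finset.prod_le_one (fun i _ => h0 i) fun i _ => hle i)
  rw [← hs, le_antisymm (hle j) hge, RCLike.ofReal_one]

end Hermitian

section TraceOrthogonal

variable {ι n K : Type*} [Fintype ι] [DecidableEq ι] [Fintype n] [Field K]
  {g : ι → Matrix n n K} {c : ι → K}

theorem trace_sum_smul_mul_of_trace_mul_eq_ite
    (horth : ∀ a b, (g a * g b).trace = if a = b then c a else 0) (z : ι → K) (b : ι) :
    ((∑ a, z a • g a) * g b).trace = z b * c b := by
  simp only [Finset.sum_mul, trace_sum, smul_mul, trace_smul, smul_eq_mul, horth, mul_ite, mul_zero,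
    Finset.sum_ite_eq', Finset.mem_univ, if_true]

theorem linearIndependent_of_trace_mul_eq_ite
    (horth : ∀ a b, (g a * g b).trace = if a = b then c a else 0) (hc : ∀ a, c a ≠ 0) :
    LinearIndependent K g := by
  refine Fintype.linearIndependent_iff.2 fun z hz b => ?_
  have := trace_sum_smul_mul_of_trace_mul_eq_ite horth z b
  rw [hz, zero_mul, trace_zero] at this
  exact (mul_eq_zero.1 this.symm).resolve_right (hc b)

theorem trace_mul_self_eq_sum_of_trace_mul_eq_ite
    (horth : ∀ a b, (g a * g b).trace = if a = b then c a else 0) (hc : ∀ a, c a ≠ 0)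
    (hcard : Fintype.card ι = Fintype.card n ^ 2) (A : Matrix n n K) :
    (A * A).trace = ∑ a, (A * g a).trace ^ 2 / c a := by
  have hspan : Submodule.span K (Set.range g) = ⊤ :=
    (linearIndependent_of_trace_mul_eq_ite horth hc).span_eq_top_of_card_eq_finrank' <| by
      rw [hcard, Module.finrank_matrix, Module.finrank_self, mul_one, sq]
  obtain ⟨z, hzA⟩ :=
    (Submodule.mem_span_range_iff_exists_fun K).1 (hspan ▸ Submodule.mem_top (x := A))
  have hAg : ∀ b, (A * g b).trace = z b * c b := fun b => by
    rw [← hzA, trace_sum_smul_mul_of_trace_mul_eq_ite horth]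
  nth_rewrite 2 [← hzA]
  rw [Finset.mul_sum, trace_sum]
  refine Finset.sum_congr rfl fun b _ => ?_
  rw [Matrix.mul_smul, trace_smul, smul_eq_mul, hAg]
  field_simp [hc b]

end TraceOrthogonal

theorem trace_mul_self_eq_trace_sq_div_add_sum_sq {ι n K : Type*} [Fintype ι] [DecidableEq ι]
    [Fintype n] [DecidableEq n] [Field K] [CharZero K] (lam : ι → Matrix n n K)
    (hcard : Fintype.card ι + 1 = Fintype.card n ^ 2) (htr : ∀ i, (lam i).trace = 0)
    (horth : ∀ i j, (lam i * lam j).trace = if i = j then 2 else 0) (A : Matrix n n K) :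
    (A * A).trace = A.trace ^ 2 / Fintype.card n + (∑ i, (A * lam i).trace ^ 2) / 2 := by
  have hn : (Fintype.card n : K) ≠ 0 := by
    rw [Nat.cast_ne_zero]
    rintro h
    simp [h] at hcard
  have horthg : ∀ a b : Option ι, (a.elim 1 lam * b.elim 1 lam).trace =
      if a = b then a.elim (Fintype.card n : K) (fun _ => 2) else 0 := by
    rintro (_ | i) (_ | j) <;> simp [htr, horth]
  have hc : ∀ a : Option ι, a.elim (Fintype.card n : K) (fun _ => 2) ≠ 0 := by
    rintro (_ | i) <;> simp [hn]
  rw [trace_mul_self_eq_sum_of_trace_mul_eq_ite horthg hc (by simpa using hcard),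
    Fintype.sum_option, Finset.sum_div]
  simp

theorem IsHermitian.sum_sq_re_trace_mul_eq {ι n 𝕜 : Type*} [Fintype ι] [DecidableEq ι]
    [Fintype n] [DecidableEq n] [RCLike 𝕜] {lam : ι → Matrix n n 𝕜}
    (hcard : Fintype.card ι + 1 = Fintype.card n ^ 2) (hherm : ∀ i, (lam i).IsHermitian)
    (htr : ∀ i, (lam i).trace = 0)
    (horth : ∀ i j, (lam i * lam j).trace = if i = j then 2 else 0)
    {A : Matrix n n 𝕜} (hA : A.IsHermitian) (hA1 : A.trace = 1) (hA2 : (A * A).trace = 1) :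
    ∑ i, RCLike.re (A * lam i).trace ^ 2 = 2 * (Fintype.card n - 1) / Fintype.card n := by
  have hn : (Fintype.card n : 𝕜) ≠ 0 := by
    rw [Nat.cast_ne_zero]
    rintro h
    simp [h] at hcard
  rw [trace_mul_self_eq_trace_sq_div_add_sum_sq lam hcard htr horth A, hA1] at hA2
  apply RCLike.ofReal_injective (K := 𝕜)
  push_cast
  simp only [fun i => hA.ofReal_re_trace_mul (hherm i)]
  field_simp at hA2 ⊢
  linear_combination hA2

end Matrix

section KyFan

variable {α β : Type*} [Fintype α] [Fintype β] [DecidableEq β]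

theorem kyFan_eq_singVals_of_forall_ne {M : Matrix α β ℝ} {k : ℕ} (hk : 1 ≤ k) {i₀ : β}
    (h0 : ∀ i ≠ i₀, singVals M i = 0) : kyFan k M = singVals M i₀ := by
  refine le_antisymm (Finset.sup'_le _ _ fun s _ => ?_) ?_
  · calc ∑ i ∈ s, singVals M i ≤ ∑ i, singVals M i :=
          Finset.sum_le_sum_of_subset_of_nonneg s.subset_univ fun i _ _ => Real.sqrt_nonneg _
      _ = singVals M i₀ := Fintype.sum_eq_single i₀ h0
  · calc singVals M i₀ = ∑ i ∈ {i₀}, singVals M i := (Finset.sum_singleton _ _).symm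
      _ ≤ kyFan k M :=
          Finset.le_sup' (fun s : Finset β => ∑ i ∈ s, singVals M i) (by simpa using hk)

theorem singVals_vecMulVec {x : α → ℝ} {y : β → ℝ} (ht : (x ⬝ᵥ x) * (y ⬝ᵥ y) ≠ 0) :
    ∃ i₀, singVals (vecMulVec x y) i₀ = √((x ⬝ᵥ x) * (y ⬝ᵥ y)) ∧
      ∀ i ≠ i₀, singVals (vecMulVec x y) i = 0 := by
  have hA : (vecMulVec x y)ᴴ * vecMulVec x y = vecMulVec y ((x ⬝ᵥ x) • y) := by
    rw [conjTranspose_vecMulVec, star_trivial, star_trivial, vecMulVec_mul_vecMulVec]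
  have hsq : ((vecMulVec x y)ᴴ * vecMulVec x y) * ((vecMulVec x y)ᴴ * vecMulVec x y) =
      ((x ⬝ᵥ x) * (y ⬝ᵥ y)) • ((vecMulVec x y)ᴴ * vecMulVec x y) := by
    rw [hA, vecMulVec_mul_vecMulVec, smul_dotProduct, smul_eq_mul, vecMulVec_smul, mul_comm]
  have htr : ((vecMulVec x y)ᴴ * vecMulVec x y).trace = (x ⬝ᵥ x) * (y ⬝ᵥ y) := by
    rw [hA, trace_vecMulVec, dotProduct_smul, smul_eq_mul]
  obtain ⟨i₀, hi₀, h0⟩ :=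
    (isHermitian_conjTranspose_mul_self _).exists_eigenvalues_eq_of_mul_self_eq_smul ht hsq htr
  exact ⟨i₀, by rw [singVals, hi₀], fun i hi => by rw [singVals, h0 i hi, Real.sqrt_zero]⟩

theorem kyFan_vecMulVec {k : ℕ} (hk : 1 ≤ k) {x : α → ℝ} {y : β → ℝ}
    (ht : (x ⬝ᵥ x) * (y ⬝ᵥ y) ≠ 0) :
    kyFan k (vecMulVec x y) = √((x ⬝ᵥ x) * (y ⬝ᵥ y)) := by
  obtain ⟨i₀, hi₀, h0⟩ := singVals_vecMulVec ht
  rw [kyFan_eq_singVals_of_forall_ne hk h0, hi₀]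

end KyFan

theorem corrFull_piKron {n d : ℕ} {lam : Fin (d ^ 2 - 1) → Matrix (Fin d) (Fin d) ℂ}
    (hherm : ∀ i, (lam i).IsHermitian) {ρs : Fin n → Matrix (Fin d) (Fin d) ℂ}
    (hρs : ∀ j, (ρs j).IsHermitian) (a : Fin n → Fin (d ^ 2 - 1)) :
    corrFull lam (piKron ρs) a = ∏ j, RCLike.re (ρs j * lam (a j)).trace := by
  rw [corrFull, ← piKron, piKron_mul_piKron, trace_piKron, ← RCLike.re_to_complex,
    ← RCLike.ofReal_re (K := ℂ) (∏ j, RCLike.re (ρs j * lam (a j)).trace), RCLike.ofReal_prod]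
  simp only [Pi.mul_apply, fun j => (hρs j).ofReal_re_trace_mul (hherm (a j))]

theorem kyFan_T_of_pure_fully_separable_multipartite_general (d : ℕ) (hd : 2 ≤ d)
    (lam : Fin (d ^ 2 - 1) → Matrix (Fin d) (Fin d) ℂ)
    (hherm : ∀ i, (lam i).IsHermitian)
    (htr : ∀ i, (lam i).trace = 0)
    (horth : ∀ i j, (lam i * lam j).trace = if i = j then 2 else 0)
    (m : ℕ)
    (ρs : Fin (m + 2) → Matrix (Fin d) (Fin d) ℂ)
    (hρs : ∀ j, (ρs j).PosSemidef ∧ (ρs j).trace = 1)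
    (ρ : Matrix (Fin (m + 2) → Fin d) (Fin (m + 2) → Fin d) ℂ)
    (hprod : ∀ v w, ρ v w = ∏ j, ρs j (v j) (w j))
    (hpure : ρ * ρ = ρ)
    (k : ℕ) (hk1 : 1 ≤ k) :
    kyFan k (Matrix.of fun (r : Fin (d ^ 2 - 1)) (c : Fin (m + 1) → Fin (d ^ 2 - 1)) =>
        corrFull lam ρ (Fin.cons r c))
      = Real.sqrt (2 ^ (m + 2) * ((d : ℝ) - 1) ^ (m + 2) / (d : ℝ) ^ (m + 2)) := by
  obtain rfl : ρ = piKron ρs := Matrix.ext hprod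
  set u : Fin (m + 2) → Fin (d ^ 2 - 1) → ℝ := fun j i => RCLike.re (ρs j * lam i).trace
  set q : ℝ := 2 * ((d : ℝ) - 1) / d
  have hcard : Fintype.card (Fin (d ^ 2 - 1)) + 1 = Fintype.card (Fin d) ^ 2 := by
    simp only [Fintype.card_fin]
    have := Nat.one_le_pow 2 d (by omega)
    omega
  have hu : ∀ j, u j ⬝ᵥ u j = q := fun j => by
    simpa only [dotProduct, sq, Fintype.card_fin] using
      (hρs j).1.1.sum_sq_re_trace_mul_eq hcard hherm htr horth (hρs j).2
        (trace_mul_self_eq_one_of_piKron_mul_self (fun j => (hρs j).1) (fun j => (hρs j).2) hpure j)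
  have hq : 0 < q := by
    have : (2 : ℝ) ≤ d := by exact_mod_cast hd
    exact div_pos (by linarith) (by linarith)
  have hT : Matrix.of (fun r (c : Fin (m + 1) → Fin (d ^ 2 - 1)) =>
      corrFull lam (piKron ρs) (Fin.cons r c)) =
      vecMulVec (u 0) (fun c => ∏ j : Fin (m + 1), u j.succ (c j)) := by
    ext r c
    rw [of_apply, corrFull_piKron hherm (fun j => (hρs j).1.1), Fin.prod_univ_succ]
    simp only [vecMulVec_apply, u, Fin.cons_zero, Fin.cons_succ]
  have hy : (fun c : Fin (m + 1) → Fin (d ^ 2 - 1) => ∏ j, u j.succ (c j)) ⬝ᵥ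
      (fun c => ∏ j, u j.succ (c j)) = q ^ (m + 1) := by
    simp [dotProduct_prod_eq_prod_dotProduct, hu]
  rw [hT, kyFan_vecMulVec hk1 (by rw [hu 0, hy]; positivity), hu 0, hy, ← pow_succ', div_pow,
    mul_pow]

/-- (Theorem 2) For a pure fully separable `n`-partite state (`n = m + 2 ≥ 2`),
all Ky Fan `k`-norms of the matricization `T_{1|2|…|n}` equal `√(2ⁿ(d-1)ⁿ/dⁿ)`. -/
theorem kyFan_T_of_pure_fully_separable_multipartite (d : ℕ) (hd : 2 ≤ d)
    (lam : Fin (d ^ 2 - 1) → Matrix (Fin d) (Fin d) ℂ)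
    (hherm : ∀ i, (lam i).IsHermitian)
    (htr : ∀ i, (lam i).trace = 0)
    (horth : ∀ i j, (lam i * lam j).trace = if i = j then 2 else 0)
    (m : ℕ)
    (ρs : Fin (m + 2) → Matrix (Fin d) (Fin d) ℂ)
    (hρs : ∀ j, (ρs j).PosSemidef ∧ (ρs j).trace = 1)
    (ρ : Matrix (Fin (m + 2) → Fin d) (Fin (m + 2) → Fin d) ℂ)
    (hprod : ∀ v w, ρ v w = ∏ j, ρs j (v j) (w j))
    (hpure : ρ * ρ = ρ)
    (k : ℕ) (hk1 : 1 ≤ k) (hk2 : k ≤ d ^ 2 - 1) :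
    kyFan k (Matrix.of fun (r : Fin (d ^ 2 - 1)) (c : Fin (m + 1) → Fin (d ^ 2 - 1)) =>
        corrFull lam ρ (Fin.cons r c))
      = Real.sqrt (2 ^ (m + 2) * ((d : ℝ) - 1) ^ (m + 2) / (d : ℝ) ^ (m + 2)) :=
  kyFan_T_of_pure_fully_separable_multipartite_general d hd lam hherm htr horth m ρs hρs ρ hprod
    hpure k hk1
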